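/- Let M be an SCM over V with induced ADMG G, and C a partition of V with acyclic quotient G_C. Assume do-calculus holds in G. Then Rule 2 holds at the cluster level: for disjoint cluster sets X, Y, Z, W, if Y is d-separated from Z given X ∪ W in the C-DAG obtained from G_C by removing all edges into X and all directed edges out of Z, then P(y | do(x), do(z), w) = P(y | do(x), z, w). -/
import Mathlib


/-- An acyclic directed mixed graph skeleton: a directed edge relation
together with a symmetric bidirected edge relation. -/
structure MixedGraph (V : Type) where
  dir : V → V → Prop
  bi : V → V → Prop
  bi_symm : ∀ a b, bi a b → bi b a

namespace MixedGraph

variable {V : Type} {I : Type}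

/-- Adjacency: a directed edge in either orientation or a bidirected edge. -/
def Adj (G : MixedGraph V) (a b : V) : Prop :=
  G.dir a b ∨ G.dir b a ∨ G.bi a b

/-- Acyclicity of the directed part. -/
def Acyclic (G : MixedGraph V) : Prop :=
  ∀ a, ¬ Relation.TransGen G.dir a a

/-- The quotient (cluster) graph of `G` by the partition given by the fibers of `π`. -/
def quot (G : MixedGraph V) (π : V → I) : MixedGraph I where
  dir i j := i ≠ j ∧ ∃ a b, π a = i ∧ π b = j ∧ G.dir a b
  bi i j := i ≠ j ∧ ∃ a b, π a = i ∧ π b = j ∧ G.bi a b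
  bi_symm := by
    rintro i j ⟨hne, a, b, ha, hb, h⟩
    exact ⟨hne.symm, b, a, hb, ha, G.bi_symm a b h⟩

/-- The mutilated graph: delete all edges with an arrowhead into `X`
and all directed edges out of `Z`. -/
def mutil (G : MixedGraph V) (X Z : Set V) : MixedGraph V where
  dir a b := G.dir a b ∧ b ∉ X ∧ a ∉ Z
  bi a b := G.bi a b ∧ a ∉ X ∧ b ∉ X
  bi_symm := by
    rintro a b ⟨h, ha, hb⟩
    exact ⟨G.bi_symm a b h, hb, ha⟩

/-- Type of an edge as traversed along a walk. -/
inductive EType : Type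
  | fwd   -- a → b
  | bwd   -- a ← b
  | bidir -- a ↔ b
deriving DecidableEq

/-- The step relation of a walk. -/
def step (G : MixedGraph V) (a : V) (e : EType) (b : V) : Prop :=
  match e with
  | .fwd => G.dir a b
  | .bwd => G.dir b a
  | .bidir => G.bi a b

/-- A walk starting at a vertex, given by a list of (edge type, next vertex). -/
def IsWalk (G : MixedGraph V) : V → List (EType × V) → Prop
  | _, [] => True
  | a, (e, b) :: rest => G.step a e b ∧ IsWalk G b rest

/-- The final vertex of a walk. -/
def walkEnd : V → List (EType × V) → V
  | a, [] => a
  | _, (_, b) :: rest => walkEnd b rest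

/-- `b` is a descendant of `a` (along directed edges, reflexively). -/
def Desc (G : MixedGraph V) : V → V → Prop :=
  Relation.ReflTransGen G.dir

/-- Whether an interior vertex between two consecutive steps is a collider:
an arrowhead on both sides. -/
def colliderAt (e₁ e₂ : EType) : Prop :=
  (e₁ = EType.fwd ∨ e₁ = EType.bidir) ∧ (e₂ = EType.bwd ∨ e₂ = EType.bidir)

/-- A walk is active (d-connecting) given a conditioning set `S`:
every interior non-collider lies outside `S` and every interior collider
is in `S` or has a descendant in `S`. -/
def Active (G : MixedGraph V) (S : Set V) : List (EType × V) → Prop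
  | [] => True
  | [_] => True
  | (e₁, b) :: (e₂, c) :: rest =>
      ((colliderAt e₁ e₂ ∧ ∃ d ∈ S, G.Desc b d) ∨ (¬ colliderAt e₁ e₂ ∧ b ∉ S))
      ∧ Active G S ((e₂, c) :: rest)

/-- The walk contains an (interior) collider belonging to `T`. -/
def HasColliderIn (G : MixedGraph V) (T : Set V) : List (EType × V) → Prop
  | (e₁, b) :: (e₂, c) :: rest =>
      (colliderAt e₁ e₂ ∧ b ∈ T) ∨ HasColliderIn G T ((e₂, c) :: rest)
  | _ => False

/-- `X` and `Y` are d-connected given `S`: some active walk joins them. -/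
def DConn (G : MixedGraph V) (S X Y : Set V) : Prop :=
  ∃ x ∈ X, ∃ w : List (EType × V),
    w ≠ [] ∧ G.IsWalk x w ∧ walkEnd x w ∈ Y ∧ G.Active S w

/-- d-separation: no active walk between `X` and `Y` given `S`. -/
def DSep (G : MixedGraph V) (S X Y : Set V) : Prop :=
  ¬ G.DConn S X Y

end MixedGraph

open scoped Classical

/-- The marginal of a (sub)distribution `Pd` on the event that the coordinates
in `S` agree with `v`. -/
noncomputable def marg {V : Type} [Fintype V] {val : V → Type}
    [∀ i, Fintype (val i)]
    (Pd : (∀ i, val i) → ℝ) (S : Set V) (v : ∀ i, val i) : ℝ :=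
  ∑ w : ∀ i, val i, if ∀ i ∈ S, w i = v i then Pd w else 0

/-- Four pairwise disjoint sets. -/
def PairwiseDisj4 {α : Type} (A B C D : Set α) : Prop :=
  Disjoint A B ∧ Disjoint A C ∧ Disjoint A D ∧
  Disjoint B C ∧ Disjoint B D ∧ Disjoint C D

namespace MixedGraph

variable {V : Type} {I : Type}

lemma active_tail {G : MixedGraph V} {S : Set V} {p : EType × V}
    {l : List (EType × V)} (h : G.Active S (p :: l)) : G.Active S l := by
  match p, l with
  | _, [] => trivial
  | (e₁, b), (e₂, c) :: rest => exact h.2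

lemma desc_quot (G : MixedGraph V) (π : V → I) (X Z : Set I) {a d : V}
    (h : (G.mutil (π ⁻¹' X) (π ⁻¹' Z)).Desc a d) :
    ((G.quot π).mutil X Z).Desc (π a) (π d) := by
  induction h with
  | refl => exact Relation.ReflTransGen.refl
  | @tail b c _ hstep ih =>
      by_cases he : π b = π c
      · rwa [← he]
      · exact ih.tail ⟨⟨he, b, c, rfl, rfl, hstep.1⟩, hstep.2.1, hstep.2.2⟩

lemma step_quot {G : MixedGraph V} {π : V → I} {X Z : Set I} {a b : V} {e : EType}
    (hne : π a ≠ π b)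
    (h : (G.mutil (π ⁻¹' X) (π ⁻¹' Z)).step a e b) :
    ((G.quot π).mutil X Z).step (π a) e (π b) := by
  cases e with
  | fwd => exact ⟨⟨hne, a, b, rfl, rfl, h.1⟩, h.2.1, h.2.2⟩
  | bwd => exact ⟨⟨hne.symm, b, a, rfl, rfl, h.1⟩, h.2.1, h.2.2⟩
  | bidir => exact ⟨⟨hne, a, b, rfl, rfl, h.1⟩, h.2.1, h.2.2⟩

lemma head_glue {Q : MixedGraph I} {S : Set I} {e₀ e₁ h₂ : EType} {c : I}
    (CA : (colliderAt e₀ e₁ ∧ ∃ d ∈ S, Q.Desc c d) ∨ (¬ colliderAt e₀ e₁ ∧ c ∉ S))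
    (CB : (colliderAt e₁ h₂ ∧ ∃ d ∈ S, Q.Desc c d) ∨ (¬ colliderAt e₁ h₂ ∧ c ∉ S)) :
    (colliderAt e₀ h₂ ∧ ∃ d ∈ S, Q.Desc c d) ∨ (¬ colliderAt e₀ h₂ ∧ c ∉ S) := by
  cases e₀ <;> cases e₁ <;> cases h₂ <;> simp_all [colliderAt] <;> tauto

lemma key (G : MixedGraph V) (π : V → I) (X Z S : Set I) :
    ∀ (l : List (EType × V)) (a : V) (e₀ : EType),
      (G.mutil (π ⁻¹' X) (π ⁻¹' Z)).IsWalk a l →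
      (G.mutil (π ⁻¹' X) (π ⁻¹' Z)).Active (π ⁻¹' S) ((e₀, a) :: l) →
      ∃ m : List (EType × I),
        ((G.quot π).mutil X Z).IsWalk (π a) m ∧
        walkEnd (π a) m = π (walkEnd a l) ∧
        ((G.quot π).mutil X Z).Active S ((e₀, π a) :: m) := by
  intro l
  induction l with
  | nil =>
      intro a e₀ _ _
      exact ⟨[], trivial, rfl, trivial⟩
  | cons p l' ih =>
      obtain ⟨e₁, b⟩ := p
      intro a e₀ hw hact
      obtain ⟨hstep, hw'⟩ := hw
      have hact' : (G.mutil (π ⁻¹' X) (π ⁻¹' Z)).Active (π ⁻¹' S) ((e₁, b) :: l') :=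
        active_tail hact
      obtain ⟨m, hm1, hm2, hm3⟩ := ih b e₁ hw' hact'
      have hCa := hact.1
      have CA : (colliderAt e₀ e₁ ∧ ∃ d ∈ S, ((G.quot π).mutil X Z).Desc (π a) d)
          ∨ (¬ colliderAt e₀ e₁ ∧ π a ∉ S) := by
        rcases hCa with ⟨hc, d, hd, hdesc⟩ | ⟨hc, ha⟩
        · exact Or.inl ⟨hc, π d, hd, desc_quot G π X Z hdesc⟩
        · exact Or.inr ⟨hc, ha⟩
      by_cases hab : π a = π b
      · refine ⟨m, by rw [hab]; exact hm1, by rw [hab]; exact hm2, ?_⟩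
        cases m with
        | nil => trivial
        | cons q m' =>
          obtain ⟨h₂, c⟩ := q
          refine ⟨?_, hm3.2⟩
          have CB : (colliderAt e₁ h₂ ∧ ∃ d ∈ S, ((G.quot π).mutil X Z).Desc (π a) d)
              ∨ (¬ colliderAt e₁ h₂ ∧ π a ∉ S) := by rw [hab]; exact hm3.1
          exact head_glue CA CB
      · exact ⟨(e₁, π b) :: m, ⟨step_quot hab hstep, hm1⟩, hm2, CA, hm3⟩

lemma dsep_transfer (G : MixedGraph V) (π : V → I) (X Y Z W : Set I)
    (hXY : Disjoint X Y) (hYZ : Disjoint Y Z) (hYW : Disjoint Y W)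
    (hsep : ((G.quot π).mutil X Z).DSep (X ∪ W) Y Z) :
    (G.mutil (π ⁻¹' X) (π ⁻¹' Z)).DSep (π ⁻¹' X ∪ π ⁻¹' W) (π ⁻¹' Y) (π ⁻¹' Z) := by
  intro hconn
  obtain ⟨x, hx, w, hne, hwalk, hend, hactive⟩ := hconn
  have hxY : π x ∈ Y := hx
  have hactive' : (G.mutil (π ⁻¹' X) (π ⁻¹' Z)).Active (π ⁻¹' (X ∪ W)) w := by
    rwa [Set.preimage_union]
  have hxS : x ∉ π ⁻¹' (X ∪ W) := by
    intro hxs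
    rcases hxs with h | h
    · exact Set.disjoint_left.mp hXY h hxY
    · exact Set.disjoint_left.mp hYW hxY h
  have hact2 : (G.mutil (π ⁻¹' X) (π ⁻¹' Z)).Active (π ⁻¹' (X ∪ W))
      ((EType.bwd, x) :: w) := by
    cases w with
    | nil => exact absurd rfl hne
    | cons q r =>
      obtain ⟨e, b⟩ := q
      exact ⟨Or.inr ⟨by simp [colliderAt], hxS⟩, hactive'⟩
  obtain ⟨m, hm1, hm2, hm3⟩ := key G π X Z (X ∪ W) w x EType.bwd hwalk hact2
  have hendZ : π (walkEnd x w) ∈ Z := hend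
  apply hsep
  refine ⟨π x, hxY, m, ?_, hm1, ?_, active_tail hm3⟩
  · rintro rfl
    have : π x ∈ Z := by rw [show π x = π (walkEnd x w) from hm2]; exact hendZ
    exact Set.disjoint_left.mp hYZ hxY this
  · rw [hm2]; exact hendZ

end MixedGraph

open MixedGraph in
/-- Rule 2 of do-calculus at the cluster level: if Rule 2 of
do-calculus holds in `G` for the family `Pdo` of interventional distributions
(in cross-multiplied form), then Rule 2 holds at the cluster level: a
d-separation `(Y ⊥ Z | X ∪ W)` in the C-DAG with edges into `X` and directed
edges out of `Z` removed yields
`P(y | do(x), do(z), w) = P(y | do(x), z, w)`. -/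
theorem stmt13 {V I : Type} [Fintype V] [Fintype I]
    {val : V → Type} [∀ i, Fintype (val i)]
    (G : MixedGraph V) (hG : G.Acyclic)
    (π : V → I) (hsurj : Function.Surjective π) (hq : (G.quot π).Acyclic)
    (Pdo : Set V → (∀ i, val i) → ℝ)
    -- Rule 2 of do-calculus holds in G:
    (hrule2 : ∀ Xv Yv Zv Wv : Set V, PairwiseDisj4 Xv Yv Zv Wv →
      (G.mutil Xv Zv).DSep (Xv ∪ Wv) Yv Zv →
      ∀ v : ∀ i, val i,
        marg (Pdo (Xv ∪ Zv)) (Xv ∪ Zv ∪ Yv ∪ Wv) v *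
          marg (Pdo Xv) (Xv ∪ Zv ∪ Wv) v =
        marg (Pdo Xv) (Xv ∪ Zv ∪ Yv ∪ Wv) v *
          marg (Pdo (Xv ∪ Zv)) (Xv ∪ Zv ∪ Wv) v) :
    -- Rule 2 holds at the cluster level:
    ∀ X Y Z W : Set I, PairwiseDisj4 X Y Z W →
      ((G.quot π).mutil X Z).DSep (X ∪ W) Y Z →
      ∀ v : ∀ i, val i,
        marg (Pdo {i | π i ∈ X ∪ Z}) {i | π i ∈ X ∪ Z ∪ Y ∪ W} v *
          marg (Pdo {i | π i ∈ X}) {i | π i ∈ X ∪ Z ∪ W} v =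
        marg (Pdo {i | π i ∈ X}) {i | π i ∈ X ∪ Z ∪ Y ∪ W} v *
          marg (Pdo {i | π i ∈ X ∪ Z}) {i | π i ∈ X ∪ Z ∪ W} v := by
  intro X Y Z W hd hsep v
  obtain ⟨h1, h2, h3, h4, h5, h6⟩ := hd
  have hdv : PairwiseDisj4 (π ⁻¹' X) (π ⁻¹' Y) (π ⁻¹' Z) (π ⁻¹' W) :=
    ⟨h1.preimage π, h2.preimage π, h3.preimage π, h4.preimage π,
      h5.preimage π, h6.preimage π⟩
  have hsepv := dsep_transfer G π X Y Z W h1 h4 h5 hsep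
  have hmain := hrule2 (π ⁻¹' X) (π ⁻¹' Y) (π ⁻¹' Z) (π ⁻¹' W) hdv hsepv v
  have e1 : {i | π i ∈ X ∪ Z} = π ⁻¹' X ∪ π ⁻¹' Z := by ext i; simp
  have e2 : {i | π i ∈ X ∪ Z ∪ Y ∪ W} = π ⁻¹' X ∪ π ⁻¹' Z ∪ π ⁻¹' Y ∪ π ⁻¹' W := by
    ext i; simp
  have e3 : {i | π i ∈ X ∪ Z ∪ W} = π ⁻¹' X ∪ π ⁻¹' Z ∪ π ⁻¹' W := by ext i; simp
  have e4 : {i | π i ∈ X} = π ⁻¹' X := rfl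
  rw [e1, e2, e3, e4]
  exact hmain
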